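/- For ω = π/8 and all γ ∈ ℝ, the spectrum of the kagome operator satisfies: (1) σ_{6π−γ,π/8} = σ_{γ,π/8} (reflexion with respect to the axis γ = 3π); (2) e ∈ σ_{−2π−γ,π/8} if and only if −e ∈ σ_{γ,π/8} (reflexion with respect to the point (−π,0)). -/

import Mathlib

/- STATEMENT 13: for `ω = π/8`, `σ_{6π−γ,π/8} = σ_{γ,π/8}` (reflexion w.r.t. the axis
`γ=3π`) and `e ∈ σ_{−2π−γ,π/8} ↔ −e ∈ σ_{γ,π/8}` (reflexion w.r.t. the point `(−π,0)`). -/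

open Complex Matrix

noncomputable section

/-- `ℓ²(ℤ²;ℂ³)`. -/
abbrev KH : Type := lp (fun _ : ℤ × ℤ => EuclideanSpace ℂ (Fin 3)) 2

/-- `Q` is the kagome operator `Q_{γ,ω}`, written entrywise: the three components of
`ℂ³` correspond to the labels `1,3,5` of the kagome lattice, the magnetic translations are
`(τ₁v)_α = v_{α₁−1,α₂}`, `(τ₂v)_α = e^{iγα₁}v_{α₁,α₂−1}`, and `Q_{γ,ω}` has zero diagonal
blocks and off-diagonal blocks `Q₁₂ = e^{i(ω+γ/8)}(τ₁* + e^{−iγ/2}τ₁*τ₂)`,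
`Q₁₃ = e^{−i(ω+γ/8)}(τ₁* + τ₂*)`, `Q₂₁ = e^{−i(ω+γ/8)}(τ₁ + e^{−iγ/2}τ₁τ₂*)`,
`Q₂₃ = e^{i(ω+γ/8)}(e^{−iγ/2}τ₁τ₂* + τ₂*)`, `Q₃₁ = e^{i(ω+γ/8)}(τ₁ + τ₂)`,
`Q₃₂ = e^{−i(ω+γ/8)}(e^{−iγ/2}τ₁*τ₂ + τ₂)`. -/
def IsKagome (γ ω : ℝ) (Q : KH →L[ℂ] KH) : Prop :=
  ∀ v : KH, ∀ a b : ℤ,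
    (Q v) (a, b) 0 =
        Complex.exp (Complex.I * ((ω : ℂ) + (γ : ℂ)/8)) *
          (v (a+1, b) 1 +
            Complex.exp (Complex.I * (-((γ : ℂ)/2) + (γ : ℂ) * ((a : ℂ)+1))) * v (a+1, b-1) 1)
      + Complex.exp (-(Complex.I * ((ω : ℂ) + (γ : ℂ)/8))) *
          (v (a+1, b) 2 + Complex.exp (-(Complex.I * (γ : ℂ) * (a : ℂ))) * v (a, b+1) 2)
    ∧
    (Q v) (a, b) 1 =
        Complex.exp (-(Complex.I * ((ω : ℂ) + (γ : ℂ)/8))) *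
          (v (a-1, b) 0 +
            Complex.exp (Complex.I * (-((γ : ℂ)/2) - (γ : ℂ) * ((a : ℂ)-1))) * v (a-1, b+1) 0)
      + Complex.exp (Complex.I * ((ω : ℂ) + (γ : ℂ)/8)) *
          (Complex.exp (Complex.I * (-((γ : ℂ)/2) - (γ : ℂ) * ((a : ℂ)-1))) * v (a-1, b+1) 2 +
            Complex.exp (-(Complex.I * (γ : ℂ) * (a : ℂ))) * v (a, b+1) 2)
    ∧
    (Q v) (a, b) 2 =
        Complex.exp (Complex.I * ((ω : ℂ) + (γ : ℂ)/8)) *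
          (v (a-1, b) 0 + Complex.exp (Complex.I * (γ : ℂ) * (a : ℂ)) * v (a, b-1) 0)
      + Complex.exp (-(Complex.I * ((ω : ℂ) + (γ : ℂ)/8))) *
          (Complex.exp (Complex.I * (-((γ : ℂ)/2) + (γ : ℂ) * ((a : ℂ)+1))) * v (a+1, b-1) 1 +
            Complex.exp (Complex.I * (γ : ℂ) * (a : ℂ)) * v (a, b-1) 1)


/-! Complex conjugation reverses the magnetic flux. View `Q_{γ,ω}` as a hopping operator with
amplitude `c = e^{i(ω+γ/8)}` and Peierls phases `p α₁ = e^{iγα₁}`, `q α₁ = e^{iγ(α₁+1/2)}`.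
Conjugating by the antiunitary `Φ v = (-1)^{α₁+α₂} v̄` turns `(c, p, q)` into `(-c̄, p̄, -q̄)`; for
`ω = π/8` these are exactly the parameters at flux `6π - γ`, and those at `-2π - γ` are
`(c̄, p̄, -q̄)`. Hence `Q_{6π-γ,π/8} = Φ Q_{γ,π/8} Φ⁻¹ = -Q_{-2π-γ,π/8}`. An antiunitary conjugation
conjugates the spectrum, and the spectrum of the self-adjoint `Q_{γ,π/8}` is real. -/

open ComplexConjugate Real
open scoped ENNReal

section Semilinear

variable {𝕜 𝕜₂ E F : Type*} [NontriviallyNormedField 𝕜] [NontriviallyNormedField 𝕜₂]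
  [NormedAddCommGroup E] [NormedSpace 𝕜 E] [NormedAddCommGroup F] [NormedSpace 𝕜₂ F]
  {σ : 𝕜 →+* 𝕜₂} {σ' : 𝕜₂ →+* 𝕜} [RingHomInvPair σ σ'] [RingHomInvPair σ' σ]

def ContinuousLinearEquiv.conjMulEquiv (e : E ≃SL[σ] F) : (E →L[𝕜] E) ≃* (F →L[𝕜₂] F) :=
  { e.arrowCongrEquiv e with
    map_mul' := fun A B => ContinuousLinearMap.ext fun x => by simp }

theorem ContinuousLinearEquiv.conjMulEquiv_apply (e : E ≃SL[σ] F) (A : E →L[𝕜] E) (x : F) :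
    e.conjMulEquiv A x = e (A (e.symm x)) := rfl

theorem ContinuousLinearEquiv.mem_spectrum_conjMulEquiv_iff (e : E ≃SL[σ] F) (A : E →L[𝕜] E)
    (z : 𝕜₂) : z ∈ spectrum 𝕜₂ (e.conjMulEquiv A) ↔ σ' z ∈ spectrum 𝕜 A := by
  have : algebraMap 𝕜₂ (F →L[𝕜₂] F) z - e.conjMulEquiv A
      = e.conjMulEquiv (algebraMap 𝕜 (E →L[𝕜] E) (σ' z) - A) :=
    ContinuousLinearMap.ext fun x => by simp [conjMulEquiv_apply]
  rw [spectrum.mem_iff, spectrum.mem_iff, this, MulEquiv.isUnit_map]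

end Semilinear

theorem IsSelfAdjoint.conj_mem_spectrum_iff {A : Type*} [Ring A] [StarRing A] [Algebra ℂ A]
    [StarModule ℂ A] {a : A} (ha : IsSelfAdjoint a) (z : ℂ) :
    conj z ∈ spectrum ℂ a ↔ z ∈ spectrum ℂ a := by
  conv_rhs => rw [← ha.star_eq, spectrum.map_star]
  rfl

section GaugedConj

variable {ι n : Type*} [Fintype n] {p : ℝ≥0∞} [Fact (1 ≤ p)]

def EuclideanSpace.gaugedConj (s : ℂ) (x : EuclideanSpace ℂ n) : EuclideanSpace ℂ n :=
  WithLp.toLp 2 fun k => s * conj (x k)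

omit [Fintype n] in
@[simp] theorem EuclideanSpace.gaugedConj_apply (s : ℂ) (x : EuclideanSpace ℂ n) (k : n) :
    x.gaugedConj s k = s * conj (x k) := rfl

theorem EuclideanSpace.norm_gaugedConj {s : ℂ} (hs : ‖s‖ = 1) (x : EuclideanSpace ℂ n) :
    ‖x.gaugedConj s‖ = ‖x‖ := by
  simp [EuclideanSpace.norm_eq, hs]

omit [Fintype n] in
theorem EuclideanSpace.gaugedConj_gaugedConj {s : ℂ} (hs : ‖s‖ = 1) (x : EuclideanSpace ℂ n) :
    (x.gaugedConj s).gaugedConj s = x := by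
  ext k
  rw [gaugedConj_apply, gaugedConj_apply, map_mul, Complex.conj_conj, ← mul_assoc,
    Complex.mul_conj', hs]
  simp

variable (p) in
def lp.gaugedConj (s : ι → ℂ) (hs : ∀ i, ‖s i‖ = 1) :
    lp (fun _ : ι => EuclideanSpace ℂ n) p ≃ₗᵢ⋆[ℂ] lp (fun _ : ι => EuclideanSpace ℂ n) p where
  toFun v := ⟨fun i => (v i).gaugedConj (s i),
    (lp.memℓp v).mono' fun i => (EuclideanSpace.norm_gaugedConj (hs i) _).le⟩
  invFun v := ⟨fun i => (v i).gaugedConj (s i),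
    (lp.memℓp v).mono' fun i => (EuclideanSpace.norm_gaugedConj (hs i) _).le⟩
  map_add' u v := by
    ext i k
    change s i * conj (u i k + v i k) = s i * conj (u i k) + s i * conj (v i k)
    rw [map_add, mul_add]
  map_smul' c v := by
    ext i k
    change s i * conj (c * v i k) = conj c * (s i * conj (v i k))
    rw [map_mul]
    ring
  left_inv v := by ext i : 2; exact EuclideanSpace.gaugedConj_gaugedConj (hs i) _
  right_inv v := by ext i : 2; exact EuclideanSpace.gaugedConj_gaugedConj (hs i) _
  norm_map' v := by
    have hp : p ≠ 0 := (zero_lt_one.trans_le (Fact.out : (1 : ℝ≥0∞) ≤ p)).ne'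
    refine le_antisymm (lp.norm_mono hp fun i => ?_) (lp.norm_mono hp fun i => ?_) <;>
      simp [EuclideanSpace.norm_gaugedConj (hs i)]

end GaugedConj

section Hermitian

variable {ι n : Type*} [Fintype n] [DecidableEq ι] [DecidableEq n]

def lp.unitVec (i : ι) (k : n) : lp (fun _ : ι => EuclideanSpace ℂ n) 2 :=
  lp.single 2 i (EuclideanSpace.single k 1)

theorem lp.unitVec_apply (i : ι) (k : n) (j : ι) (l : n) :
    lp.unitVec i k j l = if j = i ∧ l = k then 1 else 0 := by
  by_cases h : j = i
  · subst h; simp [unitVec]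
  · simp [unitVec, h]

theorem lp.inner_unitVec_left (i : ι) (k : n) (v : lp (fun _ : ι => EuclideanSpace ℂ n) 2) :
    inner ℂ (lp.unitVec i k) v = v i k := by
  simp [unitVec, lp.inner_single_left, EuclideanSpace.inner_single_left]

theorem lp.isSelfAdjoint_of_hermitian
    {A : lp (fun _ : ι => EuclideanSpace ℂ n) 2 →L[ℂ] lp (fun _ : ι => EuclideanSpace ℂ n) 2}
    (hA : ∀ i k j l, conj (A (lp.unitVec i k) j l) = A (lp.unitVec j l) i k) :
    IsSelfAdjoint A := by
  rw [ContinuousLinearMap.isSelfAdjoint_iff']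
  refine lp.ext_continuousLinearMap (by simp) fun i => ContinuousLinearMap.coe_injective <|
    (EuclideanSpace.basisFun n ℂ).toBasis.ext fun k => ?_
  ext j l
  simp only [ContinuousLinearMap.coe_coe, ContinuousLinearMap.comp_apply,
    OrthonormalBasis.coe_toBasis, EuclideanSpace.basisFun_apply,
    lp.singleContinuousLinearMap_apply]
  rw [← lp.unitVec, ← lp.inner_unitVec_left j l, ContinuousLinearMap.adjoint_inner_right,
    ← inner_conj_symm, lp.inner_unitVec_left]
  exact hA j l i k

end Hermitian

/-- `Q_{γ,ω}` with the hopping amplitude `c` and the Peierls phases `p`, `q` as free parameters. -/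
def IsKagomeHopping (c : ℂ) (p q : ℤ → ℂ) (Q : KH →L[ℂ] KH) : Prop :=
  ∀ v : KH, ∀ a b : ℤ,
    Q v (a, b) 0 = c * (v (a+1, b) 1 + q a * v (a+1, b-1) 1)
        + conj c * (v (a+1, b) 2 + conj (p a) * v (a, b+1) 2)
    ∧ Q v (a, b) 1 = conj c * (v (a-1, b) 0 + conj (q (a-1)) * v (a-1, b+1) 0)
        + c * (conj (q (a-1)) * v (a-1, b+1) 2 + conj (p a) * v (a, b+1) 2)
    ∧ Q v (a, b) 2 = c * (v (a-1, b) 0 + p a * v (a, b-1) 0)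
        + conj c * (q a * v (a+1, b-1) 1 + p a * v (a, b-1) 1)

def staggeredSign (x : ℤ × ℤ) : ℂ := (-1) ^ (x.1 + x.2)

@[simp] theorem staggeredSign_add_one_fst (a b : ℤ) :
    staggeredSign (a + 1, b) = -staggeredSign (a, b) := by
  simp [staggeredSign, add_right_comm a 1 b, zpow_add_one₀]

@[simp] theorem staggeredSign_sub_one_fst (a b : ℤ) :
    staggeredSign (a - 1, b) = -staggeredSign (a, b) := by
  simp [staggeredSign, sub_add_eq_add_sub, zpow_sub_one₀]

@[simp] theorem staggeredSign_add_one_snd (a b : ℤ) :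
    staggeredSign (a, b + 1) = -staggeredSign (a, b) := by
  simp [staggeredSign, ← add_assoc, zpow_add_one₀]

@[simp] theorem staggeredSign_sub_one_snd (a b : ℤ) :
    staggeredSign (a, b - 1) = -staggeredSign (a, b) := by
  simp [staggeredSign, ← add_sub_assoc, zpow_sub_one₀]

theorem staggeredSign_eq_one_or (x : ℤ × ℤ) : staggeredSign x = 1 ∨ staggeredSign x = -1 := by
  rw [staggeredSign, neg_one_zpow_eq_ite]
  split_ifs <;> simp

theorem norm_staggeredSign (x : ℤ × ℤ) : ‖staggeredSign x‖ = 1 := by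
  rcases staggeredSign_eq_one_or x with h | h <;> simp [h]

def kagomeGauge : KH ≃ₗᵢ⋆[ℂ] KH := lp.gaugedConj 2 staggeredSign norm_staggeredSign

@[simp] theorem kagomeGauge_apply (v : KH) (x : ℤ × ℤ) (k : Fin 3) :
    kagomeGauge v x k = staggeredSign x * conj (v x k) := rfl

@[simp] theorem kagomeGauge_symm_apply (v : KH) (x : ℤ × ℤ) (k : Fin 3) :
    kagomeGauge.symm v x k = staggeredSign x * conj (v x k) := rfl

namespace IsKagomeHopping

variable {c : ℂ} {p q : ℤ → ℂ} {A B : KH →L[ℂ] KH}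

theorem unique (hA : IsKagomeHopping c p q A) (hB : IsKagomeHopping c p q B) : A = B := by
  refine ContinuousLinearMap.ext fun v => lp.ext <| funext fun ⟨a, b⟩ => ?_
  ext k
  fin_cases k
  · exact (hA v a b).1.trans (hB v a b).1.symm
  · exact (hA v a b).2.1.trans (hB v a b).2.1.symm
  · exact (hA v a b).2.2.trans (hB v a b).2.2.symm

theorem neg (hA : IsKagomeHopping c p q A) : IsKagomeHopping (-c) p q (-A) := by
  intro v a b
  obtain ⟨h0, h1, h2⟩ := hA v a b
  refine ⟨?_, ?_, ?_⟩ <;>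
  · simp only [_root_.neg_apply, lp.coeFn_neg, Pi.neg_apply, PiLp.neg_apply, h0, h1, h2, map_neg]
    ring

/-- The hopping term from `(a', b')` to `(a, b)` is the complex conjugate of the one from
`(a, b)` to `(a', b')`, whatever `c`, `p`, `q` are. -/
theorem isSelfAdjoint (hA : IsKagomeHopping c p q A) : IsSelfAdjoint A := by
  refine lp.isSelfAdjoint_of_hermitian fun ⟨a, b⟩ k ⟨a', b'⟩ l => ?_
  fin_cases k <;> fin_cases l <;>
    simp only [(hA _ _ _).1, (hA _ _ _).2.1, (hA _ _ _).2.2, lp.unitVec_apply, Prod.mk.injEq,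
      Fin.zero_eta, Fin.mk_one, Fin.reduceFinMk, Fin.isValue, Fin.reduceEq, and_true, and_false,
      ↓reduceIte] <;>
    (try split_ifs) <;> first | (exfalso; omega) | ((try casesm* _ ∧ _); subst_vars; simp)

theorem conjMulEquiv_kagomeGauge (hA : IsKagomeHopping c p q A) :
    IsKagomeHopping (-conj c) (conj ∘ p) (-(conj ∘ q))
      (kagomeGauge.toContinuousLinearEquiv.conjMulEquiv A) := by
  intro v a b
  obtain ⟨h0, h1, h2⟩ := hA (kagomeGauge.symm v) a b
  rcases staggeredSign_eq_one_or (a, b) with hσ | hσ <;>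
  refine ⟨?_, ?_, ?_⟩ <;>
  · simp only [ContinuousLinearEquiv.conjMulEquiv_apply, Function.comp_apply, Pi.neg_apply,
      LinearIsometryEquiv.coe_toContinuousLinearEquiv, kagomeGauge_apply,
      LinearIsometryEquiv.coe_symm_toContinuousLinearEquiv, kagomeGauge_symm_apply, h0, h1, h2,
      staggeredSign_add_one_fst, staggeredSign_sub_one_fst, staggeredSign_add_one_snd,
      staggeredSign_sub_one_snd, hσ, map_add, map_mul, map_neg, map_one, Complex.conj_conj]
    ring

end IsKagomeHopping

theorem conj_exp_ofReal_mul_I (x : ℝ) : conj (exp (x * I)) = exp (↑(-x) * I) := by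
  rw [← Complex.exp_conj, map_mul, conj_ofReal, conj_I, ofReal_neg, neg_mul, mul_neg]

def kagomeHop (γ ω : ℝ) : ℂ := exp (↑(ω + γ / 8) * I)

def kagomePhase (γ : ℝ) (a : ℤ) : ℂ := exp (↑(γ * a) * I)

def kagomeDiagPhase (γ : ℝ) (a : ℤ) : ℂ := exp (↑(γ * (a + 1 / 2)) * I)

theorem IsKagome.isKagomeHopping {γ ω : ℝ} {Q : KH →L[ℂ] KH} (h : IsKagome γ ω Q) :
    IsKagomeHopping (kagomeHop γ ω) (kagomePhase γ) (kagomeDiagPhase γ) Q := by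
  intro v a b
  obtain ⟨h0, h1, h2⟩ := h v a b
  refine ⟨h0.trans ?_, h1.trans ?_, h2.trans ?_⟩ <;>
  · simp only [kagomeHop, kagomePhase, kagomeDiagPhase, conj_exp_ofReal_mul_I]
    push_cast
    ring_nf

theorem kagomeHop_six_pi_sub (γ : ℝ) :
    kagomeHop (6 * π - γ) (π / 8) = -conj (kagomeHop γ (π / 8)) := by
  rw [kagomeHop, kagomeHop, conj_exp_ofReal_mul_I, ← exp_add_pi_mul_I]
  exact exp_eq_exp_iff_exists_int.2 ⟨0, by push_cast; ring⟩

theorem kagomeHop_neg_two_pi_sub (γ : ℝ) :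
    kagomeHop (-2 * π - γ) (π / 8) = conj (kagomeHop γ (π / 8)) := by
  rw [kagomeHop, kagomeHop, conj_exp_ofReal_mul_I]
  congr 3
  ring

theorem kagomePhase_two_pi_mul_sub (k : ℤ) (γ : ℝ) :
    kagomePhase (2 * π * k - γ) = conj ∘ kagomePhase γ := by
  funext a
  rw [Function.comp_apply, kagomePhase, kagomePhase, conj_exp_ofReal_mul_I]
  exact exp_eq_exp_iff_exists_int.2 ⟨k * a, by push_cast; ring⟩

theorem kagomeDiagPhase_two_pi_mul_sub {k : ℤ} (hk : Odd k) (γ : ℝ) :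
    kagomeDiagPhase (2 * π * k - γ) = -(conj ∘ kagomeDiagPhase γ) := by
  obtain ⟨m, rfl⟩ := hk
  funext a
  rw [Pi.neg_apply, Function.comp_apply, kagomeDiagPhase, kagomeDiagPhase,
    conj_exp_ofReal_mul_I, ← exp_add_pi_mul_I]
  exact exp_eq_exp_iff_exists_int.2 ⟨(2 * m + 1) * a + m, by push_cast; ring⟩

theorem IsKagome.isKagomeHopping_six_pi_sub {γ : ℝ} {Q : KH →L[ℂ] KH}
    (h : IsKagome (6 * π - γ) (π / 8) Q) :
    IsKagomeHopping (-conj (kagomeHop γ (π / 8))) (conj ∘ kagomePhase γ)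
      (-(conj ∘ kagomeDiagPhase γ)) Q := by
  have hγ : (6 * π - γ : ℝ) = 2 * π * (3 : ℤ) - γ := by push_cast; ring
  have := h.isKagomeHopping
  rwa [kagomeHop_six_pi_sub, hγ, kagomePhase_two_pi_mul_sub,
    kagomeDiagPhase_two_pi_mul_sub (by decide)] at this

theorem IsKagome.isKagomeHopping_neg_two_pi_sub {γ : ℝ} {Q : KH →L[ℂ] KH}
    (h : IsKagome (-2 * π - γ) (π / 8) Q) :
    IsKagomeHopping (conj (kagomeHop γ (π / 8))) (conj ∘ kagomePhase γ)
      (-(conj ∘ kagomeDiagPhase γ)) Q := by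
  have hγ : (-2 * π - γ : ℝ) = 2 * π * (-1 : ℤ) - γ := by push_cast; ring
  have := h.isKagomeHopping
  rwa [kagomeHop_neg_two_pi_sub, hγ, kagomePhase_two_pi_mul_sub,
    kagomeDiagPhase_two_pi_mul_sub (by decide)] at this

theorem stmt13 (γ : ℝ) (Q Q₂ Q₃ : KH →L[ℂ] KH)
    (h : IsKagome γ (Real.pi / 8) Q)
    (h₂ : IsKagome (6 * Real.pi - γ) (Real.pi / 8) Q₂)
    (h₃ : IsKagome (-2 * Real.pi - γ) (Real.pi / 8) Q₃) :
    spectrum ℂ Q₂ = spectrum ℂ Q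
    ∧ (∀ e : ℂ, e ∈ spectrum ℂ Q₃ ↔ -e ∈ spectrum ℂ Q) := by
  set Φ := kagomeGauge.toContinuousLinearEquiv
  have hQ := h.isKagomeHopping
  have hQ₂ : Q₂ = Φ.conjMulEquiv Q :=
    h₂.isKagomeHopping_six_pi_sub.unique hQ.conjMulEquiv_kagomeGauge
  have hQ₃ : Q₃ = -Φ.conjMulEquiv Q := by
    refine h₃.isKagomeHopping_neg_two_pi_sub.unique ?_
    simpa using hQ.conjMulEquiv_kagomeGauge.neg
  have hspec (z : ℂ) : z ∈ spectrum ℂ (Φ.conjMulEquiv Q) ↔ z ∈ spectrum ℂ Q := by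
    rw [Φ.mem_spectrum_conjMulEquiv_iff, hQ.isSelfAdjoint.conj_mem_spectrum_iff]
  refine ⟨Set.ext fun e => hQ₂ ▸ hspec e, fun e => ?_⟩
  rw [hQ₃, ← spectrum.neg_eq, Set.mem_neg, hspec]

end
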